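/- For a C² function φ on an open subset of ℂⁿ, a point z, and a unit vector T ∈ ℂⁿ, the limit as r → 0⁺ of r^{-2} · [(1/2π)∫₀^{2π} φ(z + re^{iθ}T) dθ − φ(z)] equals the complex Hessian quadratic form Σ_{j,k} (∂²φ/∂z_j∂z̄_k)(z) T_j T̄_k. -/

import Mathlib

open MeasureTheory Metric Set Real Filter Topology

noncomputable section

instance {ι : Type*} : MeasurableSpace (EuclideanSpace ℂ ι) :=
  MeasurableSpace.comap WithLp.ofLp MeasurableSpace.pi

instance {ι : Type*} [Finite ι] : BorelSpace (EuclideanSpace ℂ ι) :=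
  PiLp.borelSpace 2 (X := fun _ : ι => ℂ)

instance {ι : Type*} [Fintype ι] : MeasureSpace (EuclideanSpace ℂ ι) :=
  ⟨(volume : Measure (ι → ℂ)).map (WithLp.toLp 2)⟩

/-- The circular mean of `u` over the circle of radius `r` around `a`
in the complex direction `T`. -/
def circMean {n : ℕ} (u : EuclideanSpace ℂ (Fin n) → ℝ)
    (a T : EuclideanSpace ℂ (Fin n)) (r : ℝ) : ℝ :=
  (1 / (2 * π)) * ∫ θ in (0:ℝ)..(2 * π),
    u (a + ((r : ℂ) * Complex.exp ((θ : ℂ) * Complex.I)) • T)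

/-- `u` is plurisubharmonic on `s` : upper semicontinuous and satisfying the
sub-mean value inequality over small circles in every complex direction. -/
def PshOn {n : ℕ} (u : EuclideanSpace ℂ (Fin n) → ℝ)
    (s : Set (EuclideanSpace ℂ (Fin n))) : Prop :=
  UpperSemicontinuousOn u s ∧
    ∀ a ∈ s, ∀ T : EuclideanSpace ℂ (Fin n), ‖T‖ = 1 →
      ∀ᶠ r in 𝓝[>] (0:ℝ), u a ≤ circMean u a T r

/-- The mean of `u` over the Euclidean sphere of radius `r` around `a`. -/
def sphMean {n : ℕ} (u : EuclideanSpace ℂ (Fin n) → ℝ)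
    (a : EuclideanSpace ℂ (Fin n)) (r : ℝ) : ℝ :=
  ⨍ ξ : sphere (0 : EuclideanSpace ℂ (Fin n)) 1,
    u (a + r • (ξ : EuclideanSpace ℂ (Fin n)))
      ∂((volume : Measure (EuclideanSpace ℂ (Fin n))).toSphere)

/-- `u` is subharmonic on `s` : upper semicontinuous, locally integrable and
satisfying the sub-mean value inequality over small Euclidean spheres. -/
def SubhOn {n : ℕ} (u : EuclideanSpace ℂ (Fin n) → ℝ)
    (s : Set (EuclideanSpace ℂ (Fin n))) : Prop :=
  UpperSemicontinuousOn u s ∧ LocallyIntegrableOn u s volume ∧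
    ∀ a ∈ s, ∀ᶠ r in 𝓝[>] (0:ℝ), u a ≤ sphMean u a r

/-- The real Laplacian of `φ` at `x`, computed in the orthonormal real basis
`e_j`, `i•e_j` of `ℂⁿ`. -/
def lap {n : ℕ} (φ : EuclideanSpace ℂ (Fin n) → ℝ)
    (x : EuclideanSpace ℂ (Fin n)) : ℝ :=
  ∑ j : Fin n,
    (iteratedFDeriv ℝ 2 φ x
        ![EuclideanSpace.single j (1:ℂ), EuclideanSpace.single j (1:ℂ)] +
      iteratedFDeriv ℝ 2 φ x
        ![Complex.I • EuclideanSpace.single j (1:ℂ),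
          Complex.I • EuclideanSpace.single j (1:ℂ)])

/-- The complex Hessian quadratic form `Σ_{j,k} ∂²φ/∂z_j∂z̄_k (x) T_j T̄_k`,
expressed through the real second derivative as
`(1/4)(D²φ(x)[T,T] + D²φ(x)[iT,iT])`. -/
def cHess {n : ℕ} (φ : EuclideanSpace ℂ (Fin n) → ℝ)
    (x T : EuclideanSpace ℂ (Fin n)) : ℝ :=
  (1 / 4) * (iteratedFDeriv ℝ 2 φ x ![T, T] +
    iteratedFDeriv ℝ 2 φ x ![Complex.I • T, Complex.I • T])

/-
Expand `φ` to second order at `z`: `φ (z + v) = φ z + Dφ(z) v + ½ D²φ(z)(v, v) + o(‖v‖²)`, the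
remainder coming from the mean value inequality applied to `Dφ`. On the circle
`v = r (cos θ • T + sin θ • (i • T))` the linear term averages to `0`, and since `cos²` and `sin²`
both average to `½` while `sin θ cos θ` averages to `0`, the quadratic term averages to
`(r² / 4) (D²φ(z)(T, T) + D²φ(z)(iT, iT))`, which is `r²` times the complex Hessian form.
-/

open Asymptotics

section RealNormed

variable {E F : Type*} [NormedAddCommGroup E] [NormedSpace ℝ E] [NormedAddCommGroup F]
  [NormedSpace ℝ F]

theorem ContinuousLinearMap.hasFDerivAt_half_apply_self {B : E →L[ℝ] E →L[ℝ] F}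
    (hB : ∀ v w, B v w = B w v) (y : E) :
    HasFDerivAt (fun v => (1 / 2 : ℝ) • B v v) (B y) y := by
  refine ((B.hasFDerivAt.clm_apply (hasFDerivAt_id y)).const_smul (1 / 2 : ℝ)).congr_fderiv ?_
  ext v
  simp only [smul_apply, add_apply, ContinuousLinearMap.comp_apply,
    ContinuousLinearMap.coe_id', id_eq, ContinuousLinearMap.flip_apply, hB v y]
  rw [← two_smul ℝ, smul_smul]; norm_num

theorem ContDiffAt.isLittleO_sub_taylor_two {f : E → F} {x : E} (hf : ContDiffAt ℝ 2 f x) :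
    (fun y => f y - f x - fderiv ℝ f x (y - x)
      - (1 / 2 : ℝ) • fderiv ℝ (fderiv ℝ f) x (y - x) (y - x)) =o[𝓝 x] fun y => ‖y - x‖ ^ 2 := by
  set B := fderiv ℝ (fderiv ℝ f) x
  obtain ⟨δ, hδ, hdiff⟩ : ∃ δ > 0, ∀ y ∈ ball x δ, DifferentiableAt ℝ f y :=
    Metric.eventually_nhds_iff_ball.1 <|
      (hf.eventually (by simp)).mono fun y hy => hy.differentiableAt two_ne_zero
  have hB : HasFDerivAt (fderiv ℝ f) B x :=
    ((hf.fderiv_right (m := 1) le_rfl).differentiableAt one_ne_zero).hasFDerivAt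
  have hsymm : ∀ v w, B v w = B w v := hf.isSymmSndFDerivAt (by simp)
  set g : E → F := fun y => f y - fderiv ℝ f x (y - x) - (1 / 2 : ℝ) • B (y - x) (y - x)
  have hg : ∀ y ∈ ball x δ,
      HasFDerivWithinAt g (fderiv ℝ f y - fderiv ℝ f x - B (y - x)) (ball x δ) y := by
    intro y hy
    have hq := (B.hasFDerivAt_half_apply_self hsymm (y - x)).comp y
      ((hasFDerivAt_id y).sub_const x)
    exact (((hdiff y hy).hasFDerivAt.sub ((fderiv ℝ f x).hasFDerivAt.comp y
      ((hasFDerivAt_id y).sub_const x))).sub hq).hasFDerivWithinAt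
  have hg' : (fun y => fderiv ℝ f y - fderiv ℝ f x - B (y - x)) =o[𝓝[ball x δ] x]
      fun y => ‖y - x‖ ^ 1 := by
    simpa using (hasFDerivAt_iff_isLittleO.1 hB).norm_right.mono nhdsWithin_le_nhds
  have hlim := (convex_ball x δ).isLittleO_pow_succ (mem_ball_self hδ) hg hg'
  rw [nhdsWithin_eq_nhds.2 (ball_mem_nhds x hδ)] at hlim
  refine hlim.congr_left fun y => ?_
  simp only [g, sub_self, map_zero, smul_zero, sub_zero]
  abel

theorem Filter.Eventually.forall_add_smul_of_norm_le {ι : Type*} {P : E → Prop} {x : E}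
    (hP : ∀ᶠ y in 𝓝 x, P y) {c : ι → E} {M : ℝ} (hc : ∀ i, ‖c i‖ ≤ M) :
    ∀ᶠ r in 𝓝 (0 : ℝ), ∀ i, P (x + r • c i) := by
  have hlim : Tendsto (fun p : ℝ × ι => x + p.1 • c p.2) (𝓝 0 ×ˢ 𝓟 univ) (𝓝 x) := by
    simpa using (tendsto_fst.zero_smul_isBoundedUnder_le
      (isBoundedUnder_of ⟨M, fun p => hc p.2⟩)).const_add x
  simpa using eventually_prod_principal_iff.1 (hlim.eventually hP)

theorem Asymptotics.IsLittleO.integral_comp_add_smul {R : E → F} {x : E}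
    (hR : R =o[𝓝 x] fun y => ‖y - x‖ ^ 2) {c : ℝ → E} {M : ℝ} (hc : ∀ θ, ‖c θ‖ ≤ M) (a b : ℝ) :
    (fun r : ℝ => ∫ θ in a..b, R (x + r • c θ)) =o[𝓝 0] fun r => r ^ 2 := by
  refine isLittleO_iff.2 fun ε hε => ?_
  set K := M ^ 2 * |b - a| + 1
  have hK : 0 < K := by positivity
  filter_upwards [(hR.def (div_pos hε hK)).forall_add_smul_of_norm_le hc] with r hr
  have hbound : ∀ θ, ‖R (x + r • c θ)‖ ≤ ε / K * M ^ 2 * r ^ 2 := fun θ => by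
    have hcθ : ‖c θ‖ ^ 2 ≤ M ^ 2 := pow_le_pow_left₀ (norm_nonneg _) (hc θ) 2
    calc ‖R (x + r • c θ)‖ ≤ ε / K * (r ^ 2 * ‖c θ‖ ^ 2) := by
          simpa [norm_smul, mul_pow] using hr θ
      _ ≤ ε / K * M ^ 2 * r ^ 2 := by
          rw [mul_comm (r ^ 2), ← mul_assoc]; gcongr
  calc ‖∫ θ in a..b, R (x + r • c θ)‖ ≤ ε / K * M ^ 2 * r ^ 2 * |b - a| :=
        intervalIntegral.norm_integral_le_of_norm_le_const fun θ _ => hbound θ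
    _ = ε * (M ^ 2 * |b - a| / K) * r ^ 2 := by ring
    _ ≤ ε * 1 * r ^ 2 := by
        gcongr
        exact (div_le_one hK).2 (by linarith)
    _ = ε * ‖r ^ 2‖ := by simp

theorem norm_cos_smul_add_sin_smul_le (u w : E) (θ : ℝ) :
    ‖cos θ • u + sin θ • w‖ ≤ ‖u‖ + ‖w‖ := by
  refine (norm_add_le _ _).trans (add_le_add ?_ ?_) <;> rw [norm_smul] <;>
    exact mul_le_of_le_one_left (norm_nonneg _) (by simp [abs_cos_le_one, abs_sin_le_one])

variable [CompleteSpace F]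

theorem integral_clm_cos_smul_add_sin_smul (L : E →L[ℝ] F) (u w : E) :
    ∫ θ in (0:ℝ)..2 * π, L (cos θ • u + sin θ • w) = 0 := by
  simp only [map_add, map_smul]
  rw [intervalIntegral.integral_add (Continuous.intervalIntegrable (by fun_prop) _ _)
      (Continuous.intervalIntegrable (by fun_prop) _ _),
    intervalIntegral.integral_smul_const, intervalIntegral.integral_smul_const, integral_cos,
    integral_sin]
  simp

theorem integral_bilinear_cos_smul_add_sin_smul (B : E →L[ℝ] E →L[ℝ] F) (u w : E) :
    ∫ θ in (0:ℝ)..2 * π, B (cos θ • u + sin θ • w) (cos θ • u + sin θ • w)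
      = π • (B u u + B w w) := by
  have h : ∀ θ : ℝ, B (cos θ • u + sin θ • w) (cos θ • u + sin θ • w)
      = (cos θ ^ 2 • B u u + (sin θ * cos θ) • (B u w + B w u)) + sin θ ^ 2 • B w w := by
    intro θ
    simp only [map_add, map_smul, add_apply, smul_apply, smul_add, smul_smul]
    module
  simp_rw [h]
  rw [intervalIntegral.integral_add (Continuous.intervalIntegrable (by fun_prop) _ _)
      (Continuous.intervalIntegrable (by fun_prop) _ _),
    intervalIntegral.integral_add (Continuous.intervalIntegrable (by fun_prop) _ _)
      (Continuous.intervalIntegrable (by fun_prop) _ _),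
    intervalIntegral.integral_smul_const, intervalIntegral.integral_smul_const,
    intervalIntegral.integral_smul_const, integral_cos_sq, integral_sin_mul_cos₁, integral_sin_sq]
  simp only [sin_two_pi, cos_two_pi, sin_zero, cos_zero]
  module

theorem ContDiffAt.tendsto_inv_sq_smul_circleMean_sub {f : E → F} {x : E}
    (hf : ContDiffAt ℝ 2 f x) (u w : E) :
    Tendsto (fun r : ℝ => r⁻¹ ^ 2 • ((1 / (2 * π)) •
        (∫ θ in (0:ℝ)..2 * π, f (x + r • (Real.cos θ • u + Real.sin θ • w))) - f x))
      (𝓝[≠] 0)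
      (𝓝 ((1 / 4 : ℝ) • (fderiv ℝ (fderiv ℝ f) x u u + fderiv ℝ (fderiv ℝ f) x w w))) := by
  set B := fderiv ℝ (fderiv ℝ f) x
  set c : ℝ → E := fun θ => Real.cos θ • u + Real.sin θ • w
  set R : E → F := fun y => f y - f x - fderiv ℝ f x (y - x) - (1 / 2 : ℝ) • B (y - x) (y - x)
  have hc : ∀ θ, ‖c θ‖ ≤ ‖u‖ + ‖w‖ := norm_cos_smul_add_sin_smul_le u w
  have hcont : ∀ᶠ r in 𝓝 (0 : ℝ), Continuous fun θ => f (x + r • c θ) := by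
    have hcontAt : ∀ᶠ y in 𝓝 x, ContinuousAt f y :=
      (hf.eventually (by simp)).mono fun y hy => hy.continuousAt
    filter_upwards [hcontAt.forall_add_smul_of_norm_le hc] with r hr
    exact continuous_iff_continuousAt.2 fun θ =>
      ContinuousAt.comp (f := fun θ : ℝ => x + r • c θ) (hr θ) (by fun_prop)
  have hsplit : ∀ r, Continuous (fun θ => f (x + r • c θ)) →
      ∫ θ in (0:ℝ)..2 * π, R (x + r • c θ)
        = (∫ θ in (0:ℝ)..2 * π, f (x + r • c θ))
          - ((2 * π) • f x + (r ^ 2 * π / 2) • (B u u + B w w)) := by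
    intro r hr
    simp only [R, add_sub_cancel_left, map_smul, smul_apply, smul_smul]
    rw [intervalIntegral.integral_sub, intervalIntegral.integral_sub, intervalIntegral.integral_sub,
      intervalIntegral.integral_const, intervalIntegral.integral_smul,
      intervalIntegral.integral_smul, integral_clm_cos_smul_add_sin_smul, integral_bilinear_cos_smul_add_sin_smul]
    · rw [sub_zero, smul_zero]; module
    all_goals apply Continuous.intervalIntegrable
    · exact hr
    · fun_prop
    · exact hr.sub continuous_const
    · fun_prop
    · exact (hr.sub continuous_const).sub (by fun_prop)
    · fun_prop
  have hR := (hf.isLittleO_sub_taylor_two.integral_comp_add_smul hc 0 (2 * π))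
    |>.tendsto_inv_smul_nhds_zero
  have hlim := (hR.const_smul (1 / (2 * π))).const_add ((1 / 4 : ℝ) • (B u u + B w w))
  rw [smul_zero, add_zero] at hlim
  refine (hlim.mono_left nhdsWithin_le_nhds).congr' ?_
  filter_upwards [nhdsWithin_le_nhds hcont, self_mem_nhdsWithin] with r hr (hr0 : r ≠ 0)
  rw [hsplit r hr]
  match_scalars <;> field_simp <;> ring

end RealNormed

theorem ofReal_mul_exp_mul_I_smul {V : Type*} [AddCommGroup V] [Module ℂ V] (r θ : ℝ) (v : V) :
    ((r : ℂ) * Complex.exp (θ * Complex.I)) • v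
      = r • (Real.cos θ • v + Real.sin θ • (Complex.I • v)) := by
  rw [Complex.exp_mul_I, ← Complex.ofReal_cos, ← Complex.ofReal_sin, mul_add, ← mul_assoc,
    ← Complex.ofReal_mul, ← Complex.ofReal_mul, add_smul, mul_smul, Complex.coe_smul,
    Complex.coe_smul, smul_add, smul_smul, smul_smul]

theorem tendsto_circMean_cHess_general {n : ℕ} (U : Set (EuclideanSpace ℂ (Fin n)))
    (hU : IsOpen U) (z : EuclideanSpace ℂ (Fin n)) (hz : z ∈ U)
    (φ : EuclideanSpace ℂ (Fin n) → ℝ) (hφ : ContDiffOn ℝ 2 φ U)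
    (T : EuclideanSpace ℂ (Fin n)) :
    Tendsto (fun r : ℝ => r⁻¹ ^ 2 * (circMean φ z T r - φ z))
      (𝓝[>] (0:ℝ)) (𝓝 (cHess φ z T)) := by
  have hlim := (hφ.contDiffAt (hU.mem_nhds hz)).tendsto_inv_sq_smul_circleMean_sub T
    (Complex.I • T)
  simp only [smul_eq_mul, ← ofReal_mul_exp_mul_I_smul] at hlim
  simpa [circMean, cHess, iteratedFDeriv_two_apply] using hlim.mono_left (nhdsGT_le_nhdsNE 0)

/-- For a `C²` function `φ`, a point `z` and a unit vector `T`, the limit as `r → 0⁺` of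
`r⁻² [(1/2π)∫₀^{2π} φ(z + re^{iθ}T) dθ − φ(z)]` equals the complex Hessian quadratic form
`Σ_{j,k} ∂²φ/∂z_j∂z̄_k(z) T_j T̄_k`. -/
theorem tendsto_circMean_cHess {n : ℕ} (U : Set (EuclideanSpace ℂ (Fin n)))
    (hU : IsOpen U) (z : EuclideanSpace ℂ (Fin n)) (hz : z ∈ U)
    (φ : EuclideanSpace ℂ (Fin n) → ℝ) (hφ : ContDiffOn ℝ 2 φ U)
    (T : EuclideanSpace ℂ (Fin n)) (hT : ‖T‖ = 1) :
    Tendsto (fun r : ℝ => r⁻¹ ^ 2 * (circMean φ z T r - φ z))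
      (𝓝[>] (0:ℝ)) (𝓝 (cHess φ z T)) :=
  tendsto_circMean_cHess_general U hU z hz φ hφ T
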